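/- arXiv:1404.1510 — 2 statements merged into one kernel-verified Lean document; each statement's English description precedes it below -/
import Mathlib

section
/- Let 0 < η < 1, λ > 1, δ > 1, and p₀ with p₀ < 2δ, and set r = (η λ⁻²)^{1 + 1/(2δ − p₀)}. Then for every real k with 2 ≤ k ≤ p₀ and every ρ with r ≤ ρ ≤ 1 satisfying (ρ/r)^{k − δ} ≥ 1, one has η λ⁻² ρ^{2δ − k − 1} ≥ r^{2δ − k}. -/
/-- Let `0 < η < 1`, `λ > 1`, `δ > 1`, `p₀ < 2δ` and set
`r = (η λ⁻²)^{1 + 1/(2δ - p₀)}`. Then for every real `k` with `2 ≤ k ≤ p₀` and every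
`ρ` with `r ≤ ρ ≤ 1` satisfying `(ρ/r)^{k-δ} ≥ 1`, one has
`η λ⁻² ρ^{2δ - k - 1} ≥ r^{2δ - k}`. -/
theorem shadow_constant_inequality_case2
    (η lam δ p₀ : ℝ) (hη₀ : 0 < η) (hη₁ : η < 1) (hlam : 1 < lam)
    (hδ : 1 < δ) (hp₀δ : p₀ < 2 * δ) :
    ∀ k ρ : ℝ, 2 ≤ k → k ≤ p₀ →
      ((η * lam⁻¹ ^ 2) ^ (1 + 1 / (2 * δ - p₀)) : ℝ) ≤ ρ → ρ ≤ 1 →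
      1 ≤ (ρ / (η * lam⁻¹ ^ 2) ^ (1 + 1 / (2 * δ - p₀))) ^ (k - δ) →
      ((η * lam⁻¹ ^ 2) ^ (1 + 1 / (2 * δ - p₀)) : ℝ) ^ (2 * δ - k) ≤
        η * lam⁻¹ ^ 2 * ρ ^ (2 * δ - k - 1) := by
  intro k ρ hk2 hkp hrρ hρ1 _
  have hlam0 : (0:ℝ) < lam := one_pos.trans hlam
  set a := η * lam⁻¹ ^ 2 with ha_def
  have ha0 : 0 < a := by positivity
  have hinv1 : lam⁻¹ < 1 := by
    rw [inv_lt_one_iff₀]; right; exact hlam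
  have ha1 : a < 1 := by
    have h1 : lam⁻¹ ^ 2 ≤ 1 := by nlinarith [inv_pos.mpr hlam0]
    nlinarith [inv_pos.mpr hlam0]
  set ε := 1 / (2 * δ - p₀) with hε_def
  have hpδ : 0 < 2 * δ - p₀ := by linarith
  have hε0 : 0 < ε := by positivity
  set s := 2 * δ - k with hs_def
  have hs0 : 0 < s := by rw [hs_def]; linarith
  have hεs : 1 / s ≤ ε := by
    rw [hε_def]
    exact one_div_le_one_div_of_le hpδ (by rw [hs_def]; linarith)
  set r := a ^ (1 + ε) with hr_def
  have hr0 : 0 < r := Real.rpow_pos_of_pos ha0 _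
  have hρ0 : 0 < ρ := hr0.trans_le hrρ
  have hρs : r ^ s ≤ ρ ^ s := Real.rpow_le_rpow hr0.le hrρ hs0.le
  have hsplit : ρ ^ (s - 1) = ρ ^ s / ρ := by
    rw [Real.rpow_sub hρ0, Real.rpow_one]
  rcases le_total ((ρ / r) ^ (s : ℝ)) a⁻¹ with h | h
  · -- small ρ case : ρ ≤ r * a^(-(1/s))
    have hρub : ρ / r ≤ a ^ (-(1 / s)) := by
      have h2 := Real.rpow_le_rpow (Real.rpow_nonneg (div_nonneg hρ0.le hr0.le) s) h
        (by positivity : (0:ℝ) ≤ 1 / s)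
      rwa [← Real.rpow_mul (div_nonneg hρ0.le hr0.le), mul_one_div_cancel hs0.ne',
        Real.rpow_one, Real.inv_rpow ha0.le, ← Real.rpow_neg ha0.le] at h2
    have hρle : ρ ≤ a ^ (-(1 / s)) * r := (div_le_iff₀ hr0).mp hρub
    have hstep : a * r ^ s / (a ^ (-(1 / s)) * r) ≤ a * ρ ^ s / ρ :=
      div_le_div₀ (by positivity) (mul_le_mul_of_nonneg_left hρs ha0.le) hρ0 hρle
    calc r ^ s = a ^ ((1 + ε) * s) := by rw [hr_def, ← Real.rpow_mul ha0.le]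
      _ ≤ a ^ (1 + (1 + ε) * s - (1 + ε + -(1 / s))) :=
          Real.rpow_le_rpow_of_exponent_ge ha0 ha1.le (by nlinarith [hεs])
      _ = a * r ^ s / (a ^ (-(1 / s)) * r) := by
          rw [hr_def, ← Real.rpow_mul ha0.le, Real.rpow_sub ha0,
            Real.rpow_add ha0 1 ((1 + ε) * s), Real.rpow_add ha0 (1 + ε) (-(1 / s)),
            Real.rpow_one, Real.rpow_neg ha0.le]
          ring
      _ ≤ a * ρ ^ s / ρ := hstep
      _ = a * ρ ^ (s - 1) := by rw [hsplit, mul_div_assoc]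
  · -- big ρ case
    have hρeq : ρ ^ s = (ρ / r) ^ s * r ^ s := by
      rw [Real.div_rpow hρ0.le hr0.le, div_mul_cancel₀]
      exact (Real.rpow_pos_of_pos hr0 s).ne'
    have key : r ^ s ≤ a * ρ ^ s := by
      calc r ^ s = a * (a⁻¹ * r ^ s) := by
            field_simp
        _ ≤ a * ((ρ / r) ^ s * r ^ s) := by
            apply mul_le_mul_of_nonneg_left _ ha0.le
            exact mul_le_mul_of_nonneg_right h (Real.rpow_pos_of_pos hr0 s).le
        _ = a * ρ ^ s := by rw [← hρeq]
    calc r ^ s ≤ a * ρ ^ s := key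
      _ ≤ a * ρ ^ s / ρ := by
          rw [le_div_iff₀ hρ0]
          nlinarith [mul_pos ha0 (Real.rpow_pos_of_pos hρ0 s)]
      _ = a * ρ ^ (s - 1) := by rw [hsplit, mul_div_assoc]
end

section
/- Let σ be a regular Borel probability measure on a locally compact Hausdorff topological group G such that σ ⋆ σ = σ (σ is idempotent under convolution). Then the support of σ is a compact subgroup K of G and σ is the normalized Haar measure of K. -/
/-!
Let `S` be the support of `σ`; it is conull, and `S * S ⊆ S` because `σ ∗ₘ σ = σ`. For compact
`C`, the function `u y = σ (y⁻¹ C)` is upper semicontinuous and, again by idempotence, equals the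
`σ`-average of `z ↦ u (y z)`; hence if `u` restricted to `y S` is maximal at `y`, it is constant
on `y S`. Choosing `σ C > 1/2`, `u` attains a global maximum `> 1/2` at some `y₀`, and any two
translates of `C` of measure `> 1/2` meet, which traps `S` in the compact set `y₀⁻¹ C C⁻¹ y₀`.
A compact subsemigroup of a Hausdorff group is a subgroup. Maximising `u` over the compact
group `S` now shows that `u` is constant on `S`, i.e. `σ` is `S`-invariant on compact sets, and
by regularity on all Borel sets.
-/

open MeasureTheory Measure Set Filter Topology
open scoped ENNReal Pointwise

namespace MeasureTheory.Measure

variable {M : Type*} [Monoid M] [MeasurableSpace M]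

theorem mconv_apply_eq_lintegral [MeasurableMul M] {μ ν : Measure M} [SFinite ν]
    (hmul : AEMeasurable (fun p : M × M => p.1 * p.2) (μ.prod ν)) {T : Set M}
    (hT : MeasurableSet T) : (μ ∗ₘ ν) T = ∫⁻ a, ν ((a * ·) ⁻¹' T) ∂μ := by
  rw [mconv, map_apply_of_aemeasurable hmul hT, ← lintegral_indicator_one₀
    (hmul.nullMeasurable hT), lintegral_prod _ ?_]
  · refine lintegral_congr fun a => ?_
    exact lintegral_indicator_one (measurable_const_mul a hT)
  · exact (measurable_one.indicator hT).comp_aemeasurable hmul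

theorem mul_mem_support_mconv [TopologicalSpace M] [ContinuousMul M]
    [OpensMeasurableSpace M] {μ ν : Measure M} [SFinite ν]
    (hmul : AEMeasurable (fun p : M × M => p.1 * p.2) (μ.prod ν)) {x y : M}
    (hx : x ∈ μ.support) (hy : y ∈ ν.support) : x * y ∈ (μ ∗ₘ ν).support := by
  rw [support_eq_forall_isOpen] at hx hy ⊢
  intro U hxyU hU
  obtain ⟨V, W, hV, hW, hxV, hyW, hVW⟩ :=
    isOpen_prod_iff.1 (hU.preimage continuous_mul) x y hxyU
  calc 0 < μ V * ν W := ENNReal.mul_pos (hx V hxV hV).ne' (hy W hyW hW).ne'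
    _ = μ.prod ν (V ×ˢ W) := (prod_prod V W).symm
    _ ≤ μ.prod ν ((fun p : M × M => p.1 * p.2) ⁻¹' U) := measure_mono hVW
    _ = (μ ∗ₘ ν) U := (map_apply_of_aemeasurable hmul hU.measurableSet).symm

end MeasureTheory.Measure

theorem UpperSemicontinuous.le_on_support_of_lintegral_eq {X : Type*} [TopologicalSpace X]
    [MeasurableSpace X] {μ : Measure X} [IsProbabilityMeasure μ] {f : X → ℝ≥0∞}
    (hf : UpperSemicontinuous f) {m : ℝ≥0∞} (hm : m ≠ ∞) (hle : ∀ᵐ x ∂μ, f x ≤ m)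
    (hint : ∫⁻ x, f x ∂μ = m) : ∀ x ∈ μ.support, m ≤ f x := by
  have hae : f =ᵐ[μ] fun _ => m :=
    ae_eq_of_ae_le_of_lintegral_le hle (hint ▸ hm) aemeasurable_const (by simp [hint])
  refine support_subset_of_isClosed (hf.isClosed_preimage m) ?_
  filter_upwards [hae] with x hx
  exact hx.ge

section CompactSubsemigroup

variable {G : Type*} [Group G] [TopologicalSpace G] [ContinuousMul G] [T2Space G] {S : Set G}

theorem IsCompact.one_mem_of_mul_mem (hS : IsCompact S) (hne : S.Nonempty)
    (hmul : ∀ x ∈ S, ∀ y ∈ S, x * y ∈ S) : (1 : G) ∈ S := by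
  obtain ⟨e, heS, he⟩ :=
    exists_idempotent_in_compact_subsemigroup (continuous_mul_const ·) S hne hS hmul
  rwa [mul_eq_left.1 he] at heS

-- `1` is a limit of the powers `x ^ (n + 1)`, so `x⁻¹` is a limit of the powers `x ^ n`.
theorem IsCompact.inv_mem_of_mul_mem (hS : IsCompact S)
    (hmul : ∀ x ∈ S, ∀ y ∈ S, x * y ∈ S) {x : G} (hx : x ∈ S) : x⁻¹ ∈ S := by
  have hpow : ∀ n : ℕ, x ^ (n + 1) ∈ S := fun n => by
    induction n with
    | zero => simpa using hx
    | succ n ih => rw [pow_succ]; exact hmul _ ih _ hx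
  set T := closure (range fun n : ℕ => x ^ (n + 1))
  have hTS : T ⊆ S := closure_minimal (range_subset_iff.2 hpow) hS.isClosed
  have hTmul : ∀ a ∈ T, ∀ b ∈ T, a * b ∈ T := fun a ha b hb =>
    map_mem_closure₂ continuous_mul ha hb <| by
      rintro _ ⟨m, rfl⟩ _ ⟨n, rfl⟩
      exact ⟨m + n + 1, by rw [← pow_add]; ring_nf⟩
  have h1T : (1 : G) ∈ T := (hS.of_isClosed_subset isClosed_closure hTS).one_mem_of_mul_mem
    ⟨x, subset_closure ⟨0, pow_one x⟩⟩ hTmul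
  have hshift : MapsTo (x⁻¹ * ·) (range fun n : ℕ => x ^ (n + 1)) S := by
    rintro _ ⟨n, rfl⟩
    change x⁻¹ * x ^ (n + 1) ∈ S
    rw [pow_succ', inv_mul_cancel_left]
    cases n with
    | zero => exact pow_zero x ▸ hTS h1T
    | succ n => exact hpow n
  simpa [hS.isClosed.closure_eq] using map_mem_closure (continuous_const_mul x⁻¹) h1T hshift

end CompactSubsemigroup

theorem mul_inv_mem_mul_inv_of_one_lt_add {G : Type*} [Group G] [MeasurableSpace G]
    [MeasurableMul G] (μ : Measure G) [IsProbabilityMeasure μ] {C : Set G}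
    (hC : MeasurableSet C) {y y' : G} (h : 1 < μ ((y * ·) ⁻¹' C) + μ ((y' * ·) ⁻¹' C)) :
    y * y'⁻¹ ∈ C * C⁻¹ := by
  obtain ⟨b, hb, hb'⟩ := nonempty_inter_of_measure_lt_add μ (s := (y * ·) ⁻¹' C)
    (measurable_const_mul y' hC) (subset_univ _) (subset_univ _) (by rwa [measure_univ])
  exact ⟨y * b, hb, (y' * b)⁻¹, by simpa using hb', by group⟩

section Translates

variable {G : Type*} [Group G] [TopologicalSpace G] [IsTopologicalGroup G] [MeasurableSpace G]

theorem upperSemicontinuous_measure_preimage_mul_left (μ : Measure G) [μ.OuterRegular]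
    {C : Set G} (hC : IsCompact C) : UpperSemicontinuous fun y => μ ((y * ·) ⁻¹' C) := by
  intro a t ht
  obtain ⟨U, hCU, hU, hUt⟩ := Set.exists_isOpen_lt_of_lt _ t ht
  obtain ⟨V, hV, hVC⟩ := compact_open_separated_mul_left hC
    (hU.preimage (continuous_const_mul a⁻¹)) fun c hc => hCU (by simpa using hc)
  have hnear : ∀ᶠ a' in 𝓝 a, a * a'⁻¹ ∈ V :=
    ((continuous_const_mul a).comp continuous_inv).continuousAt.preimage_mem_nhds
      (by simpa using hV)
  filter_upwards [hnear] with a' ha'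
  refine (measure_mono fun b hb => ?_).trans_lt hUt
  simpa [mul_assoc] using hVC (mul_mem_mul ha' hb)

variable [T2Space G] [BorelSpace G]

theorem map_mul_left_eq_self_of_forall_isCompact (μ : Measure G) [μ.Regular] (x : G)
    (h : ∀ K, IsCompact K → μ ((x * ·) ⁻¹' K) = μ K) : μ.map (x * ·) = μ := by
  have : (μ.map (x * ·)).Regular := Regular.map (Homeomorph.mulLeft x)
  refine OuterRegular.ext_isOpen fun U hU => ?_
  refine InnerRegularWRT.eq_of_innerRegularWRT_of_forall_eq Regular.innerRegular
    Regular.innerRegular (fun K hK => ?_) hU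
  rw [map_apply (continuous_const_mul x).measurable hK.measurableSet]
  exact h K hK

theorem exists_forall_measure_preimage_mul_left_le (μ : Measure G) [IsProbabilityMeasure μ]
    [μ.Regular] {C : Set G} (hC : IsCompact C) (hhalf : 2⁻¹ < μ C) :
    ∃ y₀, 2⁻¹ < μ ((y₀ * ·) ⁻¹' C) ∧ ∀ y, μ ((y * ·) ⁻¹' C) ≤ μ ((y₀ * ·) ⁻¹' C) := by
  set u : G → ℝ≥0∞ := fun y => μ ((y * ·) ⁻¹' C)
  have hu := upperSemicontinuous_measure_preimage_mul_left μ hC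
  have hu1 : u 1 = μ C := by simp [u]
  have hL : u ⁻¹' Ici (μ C) ⊆ C * C⁻¹ := fun y hy => by
    simpa using mul_inv_mem_mul_inv_of_one_lt_add μ hC.measurableSet (y' := 1) <|
      calc 1 = 2⁻¹ + 2⁻¹ := ENNReal.inv_two_add_inv_two.symm
        _ < u y + u 1 := ENNReal.add_lt_add (hhalf.trans_le hy) (hu1 ▸ hhalf)
  obtain ⟨y₀, hy₀, hmax⟩ := UpperSemicontinuousOn.exists_isMaxOn ⟨1, hu1.ge⟩
    ((hC.mul hC.inv).of_isClosed_subset (hu.isClosed_preimage _) hL) (hu.upperSemicontinuousOn _)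
  refine ⟨y₀, hhalf.trans_le hy₀, fun y => ?_⟩
  by_cases hy : μ C ≤ u y
  · exact hmax hy
  · exact (not_le.1 hy).le.trans hy₀

end Translates

section Idempotent

variable {G : Type*} [Group G] [TopologicalSpace G] [IsTopologicalGroup G] [MeasurableSpace G]
  [BorelSpace G] {σ : Measure G}

theorem mul_mem_support_of_mconv_self [IsProbabilityMeasure σ] (hσ : σ ∗ₘ σ = σ) {x y : G}
    (hx : x ∈ σ.support) (hy : y ∈ σ.support) : x * y ∈ σ.support := by
  have hne : σ ∗ₘ σ ≠ 0 := by rw [hσ]; exact IsProbabilityMeasure.ne_zero σ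
  exact hσ ▸ mul_mem_support_mconv (.of_map_ne_zero hne) hx hy

theorem measure_preimage_mul_left_eq_of_forall_le [T2Space G] [IsProbabilityMeasure σ]
    [σ.Regular] (hσ : σ ∗ₘ σ = σ) {C : Set G} (hC : IsCompact C) {y₀ : G}
    (hmax : ∀ z ∈ σ.support, σ ((y₀ * z * ·) ⁻¹' C) ≤ σ ((y₀ * ·) ⁻¹' C)) :
    ∀ z ∈ σ.support, σ ((y₀ * z * ·) ⁻¹' C) = σ ((y₀ * ·) ⁻¹' C) := by
  have hne : σ ∗ₘ σ ≠ 0 := by rw [hσ]; exact IsProbabilityMeasure.ne_zero σ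
  have hmean : ∫⁻ z, σ ((y₀ * z * ·) ⁻¹' C) ∂σ = σ ((y₀ * ·) ⁻¹' C) :=
    calc ∫⁻ z, σ ((y₀ * z * ·) ⁻¹' C) ∂σ = ∫⁻ z, σ ((z * ·) ⁻¹' ((y₀ * ·) ⁻¹' C)) ∂σ := by
          simp only [preimage_preimage, mul_assoc]
      _ = (σ ∗ₘ σ) ((y₀ * ·) ⁻¹' C) := (mconv_apply_eq_lintegral (.of_map_ne_zero hne)
          (measurable_const_mul y₀ hC.measurableSet)).symm
      _ = σ ((y₀ * ·) ⁻¹' C) := by rw [hσ]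
  have husc : UpperSemicontinuous fun z => σ ((y₀ * z * ·) ⁻¹' C) :=
    (upperSemicontinuous_measure_preimage_mul_left σ hC).comp (continuous_const_mul y₀)
  intro z hz
  exact (hmax z hz).antisymm <| husc.le_on_support_of_lintegral_eq (measure_ne_top _ _)
    (eventually_of_mem support_mem_ae_of_regular hmax) hmean z hz

theorem isCompact_support_of_mconv_self [T2Space G] [IsProbabilityMeasure σ] [σ.Regular]
    (hσ : σ ∗ₘ σ = σ) : IsCompact σ.support := by
  obtain ⟨C, -, hC, hhalf⟩ := Regular.innerRegular (μ := σ) isOpen_univ 2⁻¹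
    (by rw [measure_univ]; exact ENNReal.inv_lt_one.2 ENNReal.one_lt_two)
  obtain ⟨y₀, hy₀, hmax⟩ := exists_forall_measure_preimage_mul_left_le σ hC hhalf
  have hconst := measure_preimage_mul_left_eq_of_forall_le hσ hC fun z _ => hmax (y₀ * z)
  refine ((hC.mul hC.inv).image (f := fun w => y₀⁻¹ * w * y₀) (by fun_prop)).of_isClosed_subset
    isClosed_support fun z hz => ⟨y₀ * z * y₀⁻¹, ?_, by group⟩
  refine mul_inv_mem_mul_inv_of_one_lt_add σ hC.measurableSet ?_
  calc 1 = 2⁻¹ + 2⁻¹ := ENNReal.inv_two_add_inv_two.symm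
    _ < _ := by rw [hconst z hz]; exact ENNReal.add_lt_add hy₀ hy₀

theorem measure_preimage_mul_left_eq_of_mem_support [T2Space G] [IsProbabilityMeasure σ]
    [σ.Regular] (hσ : σ ∗ₘ σ = σ) {x : G} (hx : x ∈ σ.support) {C : Set G}
    (hC : IsCompact C) : σ ((x * ·) ⁻¹' C) = σ C := by
  have hS := isCompact_support_of_mconv_self hσ
  have hmulS : ∀ a ∈ σ.support, ∀ b ∈ σ.support, a * b ∈ σ.support :=
    fun _ ha _ hb => mul_mem_support_of_mconv_self hσ ha hb
  obtain ⟨y₁, hy₁, hmax⟩ := UpperSemicontinuousOn.exists_isMaxOn ⟨x, hx⟩ hS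
    ((upperSemicontinuous_measure_preimage_mul_left σ hC).upperSemicontinuousOn _)
  have hconst := measure_preimage_mul_left_eq_of_forall_le hσ hC fun z hz =>
    hmax (hmulS _ hy₁ _ hz)
  have hy₁inv := hS.inv_mem_of_mul_mem hmulS hy₁
  calc σ ((x * ·) ⁻¹' C) = σ ((y₁ * (y₁⁻¹ * x) * ·) ⁻¹' C) := by rw [mul_inv_cancel_left]
    _ = σ ((y₁ * y₁⁻¹ * ·) ⁻¹' C) := by
      rw [hconst _ (hmulS _ hy₁inv _ hx), hconst _ hy₁inv]
    _ = σ C := by simp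

end Idempotent

theorem idempotent_probability_is_haar_of_compact_subgroup_general
    {G : Type*} [Group G] [TopologicalSpace G] [IsTopologicalGroup G]
    [T2Space G]
    [MeasurableSpace G] [BorelSpace G]
    (σ : Measure G) [IsProbabilityMeasure σ] [σ.Regular]
    (hconv : (σ.prod σ).map (fun p : G × G => p.1 * p.2) = σ) :
    ∃ K : Subgroup G, IsCompact (K : Set G) ∧
      σ (K : Set G) = 1 ∧
      (∀ g ∈ K, σ.map (fun x => g * x) = σ) ∧
      (∀ U : Set G, IsOpen U → (U ∩ (K : Set G)).Nonempty → 0 < σ U) ∧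
      σ ((K : Set G)ᶜ) = 0 := by
  have hS : IsCompact σ.support := isCompact_support_of_mconv_self hconv
  have hmul : ∀ x ∈ σ.support, ∀ y ∈ σ.support, x * y ∈ σ.support :=
    fun _ hx _ hy => mul_mem_support_of_mconv_self hconv hx hy
  let K : Subgroup G :=
    { carrier := σ.support
      mul_mem' := fun hx hy => hmul _ hx _ hy
      one_mem' := hS.one_mem_of_mul_mem (nonempty_of_mem support_mem_ae_of_regular) hmul
      inv_mem' := hS.inv_mem_of_mul_mem hmul }
  refine ⟨K, hS, (prob_compl_eq_zero_iff isClosed_support.measurableSet).1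
    measure_compl_support_of_regular, fun x hx => map_mul_left_eq_self_of_forall_isCompact σ x
    fun C hC => measure_preimage_mul_left_eq_of_mem_support hconv hx hC, ?_,
    measure_compl_support_of_regular⟩
  rintro U hU ⟨x, hxU, hx⟩
  exact (support_eq_forall_isOpen.subset hx : ∀ u, x ∈ u → IsOpen u → 0 < σ u) U hxU hU

/-- Kawada–Itô: a regular Borel probability measure `σ` on a locally compact Hausdorff
topological group `G` which is idempotent under convolution (`σ ⋆ σ = σ`) is the
normalized Haar measure of a compact subgroup `K`, and the support of `σ` is `K`:
`σ K = 1`, `σ` is invariant under left translation by elements of `K`, and every open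
set meeting `K` has positive measure. -/
theorem idempotent_probability_is_haar_of_compact_subgroup
    {G : Type*} [Group G] [TopologicalSpace G] [IsTopologicalGroup G]
    [LocallyCompactSpace G] [T2Space G]
    [MeasurableSpace G] [BorelSpace G]
    (σ : Measure G) [IsProbabilityMeasure σ] [σ.Regular]
    (hconv : (σ.prod σ).map (fun p : G × G => p.1 * p.2) = σ) :
    ∃ K : Subgroup G, IsCompact (K : Set G) ∧
      σ (K : Set G) = 1 ∧
      (∀ g ∈ K, σ.map (fun x => g * x) = σ) ∧
      (∀ U : Set G, IsOpen U → (U ∩ (K : Set G)).Nonempty → 0 < σ U) ∧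
      σ ((K : Set G)ᶜ) = 0 :=
  idempotent_probability_is_haar_of_compact_subgroup_general σ hconv
end
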